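/- arXiv:0803.1029 — 2 statements merged into one kernel-verified Lean document; each statement's English description precedes it below -/
import Mathlib

section
/- Let (A, 𝒜) be a measurable space, α a finite nonzero measure on A, and let X = (X_n)_{n≥1} be a Pólya sequence with parameter α, i.e. for every k ≥ 1, P(X_1 ∈ da_1, …, X_k ∈ da_k) = ∏_{i=1}^k (α(da_i) + Σ_{l=1}^{i-1} δ_{a_l}(da_i)) / (α(A) + i - 1). Then for every n ≥ 1 the law of (X_1, …, X_n) is exchangeable: it is invariant under every permutation of the coordinates. -/
/-!
Adjacent transpositions generate the symmetric group, so it suffices to show that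
`polyaMeasure α n` is invariant under them, by induction on `n`. The next draw is made from the urn
`α + ∑ i, δ (a i)`, a symmetric function of the past draws `a`, so a transposition of two earlier
coordinates is handled by the induction hypothesis. For the last two coordinates, given the past
with urn `μ`, the pair of the last two draws has law proportional to `μ ⊗ μ + (x ↦ (x, x))_* μ`,
which is symmetric.
-/

open MeasureTheory

variable {A : Type*} [MeasurableSpace A]

/-- The joint law of the first `n` instants of a Pólya sequence with parameter `α`:
`P(X_1 ∈ da_1, …, X_n ∈ da_n) = ∏_{i=1}^n (α(da_i) + Σ_{l<i} δ_{a_l}(da_i))/(α(A)+i-1)`,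
defined recursively: the `(n+1)`-st coordinate, given the first `n`, has law
`(α + Σ_{l≤n} δ_{a_l})/(α(A)+n)`. -/
noncomputable def polyaMeasure (α : Measure A) : (n : ℕ) → Measure (Fin n → A)
  | 0 => Measure.dirac (fun i => i.elim0)
  | (n + 1) =>
      (polyaMeasure α n).bind (fun a =>
        ((α Set.univ + n)⁻¹ •
            (α + ∑ i : Fin n, Measure.dirac (a i))).map (Fin.snoc a))

open ProbabilityTheory Equiv
open scoped ENNReal

section PermStabilizer

variable {ι : Type*}

lemma measurable_comp_perm (σ : Perm ι) : Measurable fun a : ι → A => a ∘ σ :=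
  measurable_pi_iff.2 fun i => measurable_pi_apply (σ i)

def permStabilizer (μ : Measure (ι → A)) : Submonoid (Perm ι) where
  carrier := {σ | μ.map (· ∘ σ) = μ}
  one_mem' := Measure.map_id
  mul_mem' {σ τ} hσ hτ := by
    change μ.map ((· ∘ τ) ∘ (· ∘ σ)) = μ
    rw [← Measure.map_map (measurable_comp_perm τ) (measurable_comp_perm σ)]
    simp_all

lemma permStabilizer_eq_top_of_swap_castSucc_succ_mem {n : ℕ} {μ : Measure (Fin (n + 1) → A)}
    (h : ∀ i : Fin n, swap i.castSucc i.succ ∈ permStabilizer μ) : permStabilizer μ = ⊤ := by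
  rw [eq_top_iff, ← Perm.mclosure_swap_castSucc_succ, Submonoid.closure_le]
  rintro _ ⟨i, rfl⟩
  exact h i

end PermStabilizer

lemma measurable_snoc {n : ℕ} :
    Measurable fun p : (Fin n → A) × A => (Fin.snoc p.1 p.2 : Fin (n + 1) → A) := by
  refine measurable_pi_iff.2 fun j => ?_
  induction j using Fin.lastCases with
  | last => simpa only [Fin.snoc_last] using measurable_snd
  | cast i => simp only [Fin.snoc_castSucc]; fun_prop

lemma measurable_snoc_left {n : ℕ} (a : Fin n → A) :
    Measurable (Fin.snoc (α := fun _ => A) a) :=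
  measurable_snoc.comp measurable_prodMk_left

section Snoc

variable {β : Type*}

lemma snoc_comp_swap_castSucc {n : ℕ} (a : Fin n → β) (x : β) (i j : Fin n) :
    (Fin.snoc a x : Fin (n + 1) → β) ∘ swap i.castSucc j.castSucc = Fin.snoc (a ∘ swap i j) x := by
  ext k
  induction k using Fin.lastCases with
  | last => simp [swap_apply_of_ne_of_ne (Fin.castSucc_lt_last i).ne' (Fin.castSucc_lt_last j).ne']
  | cast k => simp [← (Fin.castSucc_injective n).map_swap]

lemma snoc_snoc_comp_swap_last {m : ℕ} (a : Fin m → β) (x y : β) :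
    (Fin.snoc (Fin.snoc a x) y : Fin (m + 2) → β) ∘ swap (Fin.last m).castSucc (Fin.last (m + 1)) =
      Fin.snoc (Fin.snoc a y) x := by
  ext k
  induction k using Fin.lastCases with
  | last => simp
  | cast k =>
    induction k using Fin.lastCases with
    | last => simp
    | cast k =>
      simp [swap_apply_of_ne_of_ne (Fin.castSucc_injective _ |>.ne (Fin.castSucc_lt_last k).ne)
        (Fin.castSucc_lt_last _).ne]

end Snoc

noncomputable def polyaUrn {ι : Type*} [Fintype ι] (α : Measure A) (a : ι → A) : Measure A :=
  α + ∑ i, Measure.dirac (a i)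

instance {ι : Type*} [Fintype ι] (α : Measure A) [SFinite α] (a : ι → A) :
    SFinite (polyaUrn α a) := by
  unfold polyaUrn; infer_instance

lemma polyaUrn_comp_perm {ι : Type*} [Fintype ι] (α : Measure A) (a : ι → A) (σ : Perm ι) :
    polyaUrn α (a ∘ σ) = polyaUrn α a := by
  simp only [polyaUrn, Function.comp_apply, Equiv.sum_comp σ fun i => Measure.dirac (a i)]

lemma polyaUrn_snoc {n : ℕ} (α : Measure A) (a : Fin n → A) (x : A) :
    polyaUrn α (Fin.snoc a x : Fin (n + 1) → A) = polyaUrn α a + Measure.dirac x := by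
  simp [polyaUrn, Fin.sum_univ_castSucc, add_assoc]

noncomputable def polyaKernel (α : Measure A) [SFinite α] (n : ℕ) :
    Kernel (Fin n → A) (Fin (n + 1) → A) where
  toFun a := ((α Set.univ + n)⁻¹ • polyaUrn α a).map (Fin.snoc a)
  measurable' := by
    refine Measure.measurable_of_measurable_coe _ fun s hs => ?_
    have hsnoc : MeasurableSet {p : (Fin n → A) × A | Fin.snoc p.1 p.2 ∈ s} := measurable_snoc hs
    have key : ∀ a : Fin n → A, ((α Set.univ + n)⁻¹ • polyaUrn α a).map (Fin.snoc a) s =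
        (α Set.univ + n)⁻¹ * (α (Fin.snoc (α := fun _ => A) a ⁻¹' s) +
          ∑ i, s.indicator 1 (Fin.snoc a (a i) : Fin (n + 1) → A)) := by
      intro a
      rw [Measure.map_apply (measurable_snoc_left a) hs]
      simp only [polyaUrn, Measure.smul_apply, Measure.add_apply, Measure.coe_finsetSum,
        Finset.sum_apply, Measure.dirac_apply' _ (measurable_snoc_left a hs), smul_eq_mul]
      -- `(Fin.snoc a ⁻¹' s).indicator 1 (a i)` unfolds to `s.indicator 1 (Fin.snoc a (a i))`
      rfl
    simp only [key]
    refine ((measurable_measure_prodMk_left hsnoc).add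
      (Finset.measurable_sum _ fun i _ => (measurable_one.indicator hs).comp ?_)).const_mul _
    exact measurable_snoc.comp (measurable_id.prodMk (measurable_pi_apply i))

lemma polyaMeasure_succ (α : Measure A) [SFinite α] (n : ℕ) :
    polyaMeasure α (n + 1) = polyaKernel α n ∘ₘ polyaMeasure α n :=
  rfl

lemma lintegral_polyaKernel (α : Measure A) [SFinite α] {n : ℕ} (a : Fin n → A)
    {f : (Fin (n + 1) → A) → ℝ≥0∞} (hf : Measurable f) :
    ∫⁻ b, f b ∂polyaKernel α n a = (α Set.univ + n)⁻¹ * ∫⁻ x, f (Fin.snoc a x) ∂polyaUrn α a := by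
  rw [polyaKernel, Kernel.coe_mk, lintegral_map hf (measurable_snoc_left a), lintegral_smul_measure,
    smul_eq_mul]

lemma lintegral_lintegral_add_dirac_swap (μ : Measure A) [SFinite μ] {g : A → A → ℝ≥0∞}
    (hg : Measurable (Function.uncurry g)) :
    ∫⁻ x, ∫⁻ y, g y x ∂(μ + Measure.dirac x) ∂μ = ∫⁻ x, ∫⁻ y, g x y ∂(μ + Measure.dirac x) ∂μ := by
  have hg' : Measurable (Function.uncurry fun x y => g y x) := hg.comp measurable_swap
  simp only [lintegral_add_measure, lintegral_dirac' _ hg.of_uncurry_right,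
    lintegral_dirac' _ hg'.of_uncurry_right]
  have hl : Measurable fun x => ∫⁻ y, g y x ∂μ := hg'.lintegral_prod_right'
  have hr : Measurable fun x => ∫⁻ y, g x y ∂μ := hg.lintegral_prod_right'
  rw [lintegral_add_left hl, lintegral_add_left hr, lintegral_lintegral_swap hg'.aemeasurable]

lemma lintegral_polyaKernel_comp (α : Measure A) [SFinite α] {m : ℕ} (a : Fin m → A)
    {f : (Fin (m + 2) → A) → ℝ≥0∞} (hf : Measurable f) :
    ∫⁻ b, f b ∂(polyaKernel α (m + 1) ∘ₖ polyaKernel α m) a =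
      (α Set.univ + m)⁻¹ * ((α Set.univ + (m + 1 : ℕ))⁻¹ *
        ∫⁻ x, ∫⁻ y, f (Fin.snoc (Fin.snoc a x) y)
          ∂(polyaUrn α a + Measure.dirac x) ∂polyaUrn α a) := by
  have hinv : (α Set.univ + (m + 1 : ℕ))⁻¹ ≠ ∞ := by simp
  rw [Kernel.lintegral_comp _ _ _ hf, lintegral_polyaKernel α a hf.lintegral_kernel,
    ← lintegral_const_mul' _ _ hinv]
  simp only [lintegral_polyaKernel α _ hf, polyaUrn_snoc]

lemma polyaMeasure_map_swap_last (α : Measure A) [SFinite α] (m : ℕ) :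
    (polyaMeasure α (m + 2)).map (· ∘ swap (Fin.last m).castSucc (Fin.last (m + 1))) =
      polyaMeasure α (m + 2) := by
  have hsw := measurable_comp_perm (A := A) (swap (Fin.last m).castSucc (Fin.last (m + 1)))
  rw [polyaMeasure_succ, polyaMeasure_succ, Measure.comp_assoc, Measure.map_comp _ _ hsw]
  congr 1
  ext a : 1
  refine Measure.ext_of_lintegral _ fun f hf => ?_
  have hg : Measurable fun p : A × A => f (Fin.snoc (Fin.snoc a p.1) p.2) :=
    hf.comp <| measurable_snoc.comp <|
      ((measurable_snoc_left a).comp measurable_fst).prodMk measurable_snd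
  rw [Kernel.lintegral_map _ hsw _ hf,
    lintegral_polyaKernel_comp α a (f := fun b => f (b ∘ _)) (hf.comp hsw),
    lintegral_polyaKernel_comp α a hf]
  simp only [snoc_snoc_comp_swap_last]
  rw [lintegral_lintegral_add_dirac_swap _ hg]

lemma polyaMeasure_succ_map_swap_castSucc (α : Measure A) [SFinite α] {n : ℕ} {i j : Fin n}
    (h : (polyaMeasure α n).map (· ∘ swap i j) = polyaMeasure α n) :
    (polyaMeasure α (n + 1)).map (· ∘ swap i.castSucc j.castSucc) = polyaMeasure α (n + 1) := by
  have hsw := measurable_comp_perm (A := A) (swap i j)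
  have hstep : (polyaKernel α n).map (· ∘ swap i.castSucc j.castSucc) =
      (polyaKernel α n).comap (· ∘ swap i j) hsw := by
    ext a : 1
    rw [Kernel.map_apply _ (measurable_comp_perm _), Kernel.comap_apply, polyaKernel, Kernel.coe_mk,
      Measure.map_map (measurable_comp_perm _) (measurable_snoc_left a), polyaUrn_comp_perm]
    congr 1
    funext x
    exact snoc_comp_swap_castSucc a x i j
  rw [polyaMeasure_succ, Measure.map_comp _ _ (measurable_comp_perm _), hstep,
    ← Kernel.comp_deterministic_eq_comap, ← Measure.comp_assoc,
    Measure.deterministic_comp_eq_map, h]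

theorem polyaMeasure_map_comp_perm (α : Measure A) [SFinite α] :
    ∀ (n : ℕ) (σ : Perm (Fin n)), (polyaMeasure α n).map (· ∘ σ) = polyaMeasure α n
  | 0, σ => by rw [Subsingleton.elim σ 1]; exact Measure.map_id
  | 1, σ => by rw [Subsingleton.elim σ 1]; exact Measure.map_id
  | m + 2, σ => by
    suffices permStabilizer (polyaMeasure α (m + 2)) = ⊤ from (Submonoid.eq_top_iff' _).1 this σ
    refine permStabilizer_eq_top_of_swap_castSucc_succ_mem fun i => ?_
    induction i using Fin.lastCases with
    | last => exact polyaMeasure_map_swap_last α m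
    | cast j =>
      rw [Fin.succ_castSucc]
      exact polyaMeasure_succ_map_swap_castSucc α (polyaMeasure_map_comp_perm α (m + 1) _)

theorem polya_exchangeable_general (α : Measure A) [IsFiniteMeasure α]
    {Ω : Type*} [MeasurableSpace Ω] (P : Measure Ω)
    (X : ℕ → Ω → A) (hXmeas : ∀ i, Measurable (X i))
    (hX : ∀ n : ℕ, Measure.map (fun ω (i : Fin n) => X (i + 1) ω) P = polyaMeasure α n) :
    ∀ (n : ℕ) (σ : Equiv.Perm (Fin n)),
      Measure.map (fun ω (i : Fin n) => X (σ i + 1) ω) P =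
        Measure.map (fun ω (i : Fin n) => X (i + 1) ω) P := by
  intro n σ
  have hXn : Measurable fun ω (i : Fin n) => X (i + 1) ω := measurable_pi_iff.2 fun i => hXmeas _
  calc P.map (fun ω (i : Fin n) => X (σ i + 1) ω)
      = (P.map fun ω (i : Fin n) => X (i + 1) ω).map (· ∘ σ) :=
        (Measure.map_map (measurable_comp_perm σ) hXn).symm
    _ = P.map fun ω (i : Fin n) => X (i + 1) ω := by rw [hX n, polyaMeasure_map_comp_perm]

/-- A Pólya sequence with a finite nonzero parameter `α` is exchangeable: for every `n`
and every permutation `σ` of the coordinates, `(X_{σ(1)},…,X_{σ(n)})` has the same law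
as `(X_1,…,X_n)`. -/
theorem polya_exchangeable (α : Measure A) [IsFiniteMeasure α] (hα : α ≠ 0)
    {Ω : Type*} [MeasurableSpace Ω] (P : Measure Ω) [IsProbabilityMeasure P]
    (X : ℕ → Ω → A) (hXmeas : ∀ i, Measurable (X i))
    (hX : ∀ n : ℕ, Measure.map (fun ω (i : Fin n) => X (i + 1) ω) P = polyaMeasure α n) :
    ∀ (n : ℕ) (σ : Equiv.Perm (Fin n)),
      Measure.map (fun ω (i : Fin n) => X (σ i + 1) ω) P =
        Measure.map (fun ω (i : Fin n) => X (i + 1) ω) P :=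
  polya_exchangeable_general α P X hXmeas hX
end

section
/- Let X = (X_n)_{n≥1} be a Pólya sequence with parameter α on (A,𝒜). Then for every k ≥ 1 and α-⊗-Pólya-a.e. (a_1,…,a_k) ∈ A^k, the conditional law of (X_{k+n})_{n≥1} given X_1 = a_1, …, X_k = a_k is that of a Pólya sequence with parameter α + Σ_{l=1}^k δ_{a_l}. -/
/-!
Given the first `n` draws `a`, the next draw has law `α + Σ_{i ≤ n} δ_{a_i}` normalised. Hence
the step of the urn with parameter `α` from the history `(a, b)` is the step of the urn with
parameter `α + Σ_l δ_{a_l}` from `b`, prefixed by `a`; the theorem follows by induction on the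
number of further draws and associativity of the Giry bind. The only technical point is that the
Pólya laws depend measurably on their parameter, which holds because they are sub-probability
measures built by binds of jointly measurable families.
-/

open MeasureTheory
open scoped ENNReal

variable {A : Type*} [MeasurableSpace A]

lemma measurable_uncurry_snoc {n : ℕ} :
    Measurable (Function.uncurry (Fin.snoc (α := fun _ => A) (n := n))) := by
  refine measurable_pi_lambda _ fun j => ?_
  induction j using Fin.lastCases with
  | last => simpa [Function.uncurry] using measurable_snd
  | cast i =>
    simpa [Function.uncurry, Function.comp_def] using (measurable_pi_apply i).comp measurable_fst

lemma measurable_uncurry_append {k m : ℕ} :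
    Measurable
      (Function.uncurry (Fin.append : (Fin k → A) → (Fin m → A) → Fin (k + m) → A)) := by
  refine measurable_pi_lambda _ fun j => ?_
  induction j using Fin.addCases with
  | left i =>
    simpa [Function.uncurry, Function.comp_def] using (measurable_pi_apply i).comp measurable_fst
  | right i =>
    simpa [Function.uncurry, Function.comp_def] using (measurable_pi_apply i).comp measurable_snd

namespace MeasureTheory.Measure

variable {B C D : Type*} [MeasurableSpace B] [MeasurableSpace C] [MeasurableSpace D]

lemma bind_map (μ : Measure B) {f : B → C} {g : C → Measure D}
    (hf : Measurable f) (hg : Measurable g) :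
    (μ.map f).bind g = μ.bind (g ∘ f) := by
  rw [bind, bind, map_map hg hf]

lemma map_bind (μ : Measure B) {f : B → Measure C} {g : C → D}
    (hf : Measurable f) (hg : Measurable g) :
    (μ.bind f).map g = μ.bind fun x => (f x).map g := by
  rw [bind, bind, ← join_map_map hg, map_map (measurable_map g hg) hf]
  rfl

end MeasureTheory.Measure

section MeasurableFamilies

variable {γ B C : Type*} [MeasurableSpace γ] [MeasurableSpace B] [MeasurableSpace C]

lemma Measurable.smul_measure_of_measurable {f : γ → ℝ≥0∞} {μ : γ → Measure B}
    (hf : Measurable f) (hμ : Measurable μ) : Measurable fun x => f x • μ x := by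
  refine Measure.measurable_of_measurable_coe _ fun s hs => ?_
  simp only [Measure.smul_apply, smul_eq_mul]
  exact hf.mul ((Measure.measurable_coe hs).comp hμ)

/-- A measurable family of sub-probability measures is a finite kernel, which is what makes
`x ↦ ∫⁻ b, g x b s ∂μ x` measurable. -/
lemma Measurable.measure_bind {μ : γ → Measure B} {g : γ → B → Measure C}
    (hμ : Measurable μ) (hμ_le : ∀ x, μ x Set.univ ≤ 1)
    (hg : Measurable (Function.uncurry g)) :
    Measurable fun x => (μ x).bind (g x) := by
  let κ : ProbabilityTheory.Kernel γ B := ⟨μ, hμ⟩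
  have : ProbabilityTheory.IsFiniteKernel κ := ⟨⟨1, ENNReal.one_lt_top, hμ_le⟩⟩
  refine Measure.measurable_of_measurable_coe _ fun s hs => ?_
  simp_rw [fun x => Measure.bind_apply hs (hg.of_uncurry_left (x := x)).aemeasurable]
  exact Measurable.lintegral_kernel_prod_right (κ := κ) (f := fun x b => g x b s)
    ((Measure.measurable_coe hs).comp hg)

lemma Measurable.measure_map {μ : γ → Measure B} {F : γ → B → C}
    (hμ : Measurable μ) (hμ_le : ∀ x, μ x Set.univ ≤ 1)
    (hF : Measurable (Function.uncurry F)) :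
    Measurable fun x => (μ x).map (F x) := by
  simp_rw [fun x => (Measure.bind_dirac_eq_map (μ x) (hF.of_uncurry_left (x := x))).symm]
  exact hμ.measure_bind hμ_le (Measure.measurable_dirac.comp hF)

end MeasurableFamilies

noncomputable def polyaParam (β : Measure A) {n : ℕ} (a : Fin n → A) : Measure A :=
  β + ∑ i, Measure.dirac (a i)

noncomputable def polyaStep (β : Measure A) (n : ℕ) (a : Fin n → A) :
    Measure (Fin (n + 1) → A) :=
  ((β Set.univ + n)⁻¹ • polyaParam β a).map (Fin.snoc a)

lemma polyaMeasure_succ_s3 (β : Measure A) (n : ℕ) :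
    polyaMeasure β (n + 1) = (polyaMeasure β n).bind (polyaStep β n) := rfl

lemma polyaParam_apply_univ (β : Measure A) {n : ℕ} (a : Fin n → A) :
    polyaParam β a Set.univ = β Set.univ + n := by
  simp [polyaParam]

lemma polyaParam_append (β : Measure A) {k m : ℕ} (a : Fin k → A) (b : Fin m → A) :
    polyaParam β (Fin.append a b) = polyaParam (polyaParam β a) b := by
  simp only [polyaParam, Fin.sum_univ_add, Fin.append_left, Fin.append_right, add_assoc]

lemma measurable_polyaParam (n : ℕ) :
    Measurable fun p : Measure A × (Fin n → A) => polyaParam p.1 p.2 := by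
  unfold polyaParam
  fun_prop

lemma normalized_polyaParam_apply_univ_le (β : Measure A) {n : ℕ} (a : Fin n → A) :
    ((β Set.univ + n)⁻¹ • polyaParam β a) Set.univ ≤ 1 := by
  rw [Measure.smul_apply, smul_eq_mul, polyaParam_apply_univ]
  exact ENNReal.inv_mul_le_one _

lemma measurable_uncurry_polyaStep (n : ℕ) :
    Measurable fun p : Measure A × (Fin n → A) => polyaStep p.1 n p.2 := by
  have hmass : Measurable fun p : Measure A × (Fin n → A) => (p.1 Set.univ + n)⁻¹ :=
    (((Measure.measurable_coe MeasurableSet.univ).comp measurable_fst).add_const _).inv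
  exact (hmass.smul_measure_of_measurable (measurable_polyaParam n)).measure_map
    (fun p => normalized_polyaParam_apply_univ_le p.1 p.2)
    (measurable_uncurry_snoc.comp (measurable_snd.comp measurable_fst |>.prodMk measurable_snd))

lemma measurable_polyaStep (β : Measure A) (n : ℕ) : Measurable (polyaStep β n) :=
  (measurable_uncurry_polyaStep n).comp measurable_prodMk_left

lemma polyaStep_apply_univ_le (β : Measure A) {n : ℕ} (a : Fin n → A) :
    polyaStep β n a Set.univ ≤ 1 := by
  rw [polyaStep, Measure.map_apply measurable_uncurry_snoc.of_uncurry_left MeasurableSet.univ]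
  exact normalized_polyaParam_apply_univ_le β a

lemma polyaMeasure_apply_univ_le (β : Measure A) (n : ℕ) : polyaMeasure β n Set.univ ≤ 1 := by
  induction n with
  | zero => simp [polyaMeasure]
  | succ n ih =>
    calc polyaMeasure β (n + 1) Set.univ
        ≤ ∫⁻ a, polyaStep β n a Set.univ ∂polyaMeasure β n :=
          Measure.bind_apply_le _ MeasurableSet.univ
      _ ≤ ∫⁻ _, 1 ∂polyaMeasure β n := lintegral_mono fun a => polyaStep_apply_univ_le β a
      _ ≤ 1 := by rwa [lintegral_one]

lemma measurable_polyaMeasure (n : ℕ) : Measurable fun β : Measure A => polyaMeasure β n := by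
  induction n with
  | zero => exact measurable_const
  | succ n ih =>
    exact ih.measure_bind (fun β => polyaMeasure_apply_univ_le β n)
      (measurable_uncurry_polyaStep n)

lemma polyaStep_append (β : Measure A) {k m : ℕ} (a : Fin k → A) (b : Fin m → A) :
    polyaStep β (k + m) (Fin.append a b) =
      (polyaStep (polyaParam β a) m b).map (Fin.append a) := by
  have hmass : polyaParam β a Set.univ + m = β Set.univ + ((k + m : ℕ) : ℝ≥0∞) := by
    rw [polyaParam_apply_univ]; push_cast; ring
  rw [polyaStep, polyaStep, Measure.map_map measurable_uncurry_append.of_uncurry_left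
    measurable_uncurry_snoc.of_uncurry_left, polyaParam_append, hmass]
  congr 1
  funext x
  exact (Fin.append_snoc a b x).symm

lemma bind_polyaStep_map_append (β : Measure A) {k m : ℕ} (a : Fin k → A)
    (ν : Measure (Fin m → A)) :
    (ν.map (Fin.append a)).bind (polyaStep β (k + m)) =
      (ν.bind (polyaStep (polyaParam β a) m)).map (Fin.append a) := by
  rw [Measure.bind_map ν measurable_uncurry_append.of_uncurry_left (measurable_polyaStep _ _),
    Measure.map_bind ν (measurable_polyaStep _ _) measurable_uncurry_append.of_uncurry_left]
  exact congrArg ν.bind (funext fun b => polyaStep_append β a b)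

/-- The conditional law is stated as the disintegration of the law of the first `k + m` draws
along the first `k` of them. -/
theorem polya_conditional_tail_general (α : Measure A)
    (k : ℕ) (m : ℕ) :
    polyaMeasure α (k + m) =
      (polyaMeasure α k).bind (fun a =>
        (polyaMeasure (α + ∑ l : Fin k, Measure.dirac (a l)) m).map
          (fun b => Fin.append a b)) := by
  change polyaMeasure α (k + m) =
    (polyaMeasure α k).bind fun a => (polyaMeasure (polyaParam α a) m).map (Fin.append a)
  induction m with
  | zero =>
    have hprefix (a : Fin k → A) : (polyaMeasure (polyaParam α a) 0).map (Fin.append a) =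
        Measure.dirac a := by
      rw [polyaMeasure, Measure.map_dirac' measurable_uncurry_append.of_uncurry_left]
      exact congrArg _ (Fin.append_elim0 a)
    simp only [hprefix, Measure.bind_dirac]
    rfl
  | succ m ih =>
    have hparam : Measurable fun a : Fin k → A => polyaMeasure (polyaParam α a) m :=
      (measurable_polyaMeasure m).comp ((measurable_polyaParam k).comp measurable_prodMk_left)
    have hprefix : Measurable fun a : Fin k → A =>
        (polyaMeasure (polyaParam α a) m).map (Fin.append a) :=
      hparam.measure_map (fun a => polyaMeasure_apply_univ_le _ m) measurable_uncurry_append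
    change polyaMeasure α (k + m + 1) = _
    rw [polyaMeasure_succ_s3, ih, Measure.bind_bind hprefix.aemeasurable
      (measurable_polyaStep _ _).aemeasurable]
    simp only [bind_polyaStep_map_append, polyaMeasure_succ_s3]

/-- Conditionally on `X_1 = a_1, …, X_k = a_k`, the continuation `(X_{k+n})_{n≥1}` of a
Pólya sequence with parameter `α` is a Pólya sequence with parameter `α + Σ_{l≤k} δ_{a_l}`:
for all `m`, the joint law of the first `k+m` instants is obtained by first drawing
`(a_1,…,a_k)` from the `k`-dimensional Pólya law and then the next `m` coordinates from
the `m`-dimensional Pólya law with updated parameter `α + Σ_{l=1}^k δ_{a_l}`. -/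
theorem polya_conditional_tail (α : Measure A) [IsFiniteMeasure α] (hα : α ≠ 0)
    (k : ℕ) (hk : 1 ≤ k) (m : ℕ) :
    polyaMeasure α (k + m) =
      (polyaMeasure α k).bind (fun a =>
        (polyaMeasure (α + ∑ l : Fin k, Measure.dirac (a l)) m).map
          (fun b => Fin.append a b)) :=
  polya_conditional_tail_general α k m
end
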